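/- If a finite graph G is 3-colorable, then for every type A there is a satisfying assignment for the condition Σ_G over A in which every f_v is a ternary projection on A and every g_{(u,v)} is a 6-ary projection on A. -/
import Mathlib


def SatisfiesSigma {V A : Type*} (G : SimpleGraph V)
    (f : V → A → A → A → A) (g : V → V → A → A → A → A → A → A → A) : Prop :=
  ∀ u v, G.Adj u v → ∀ x y z : A,
    f u x y z = g u v x y x z y z ∧ f v x y z = g u v y x z x z y

/-- `f` is a ternary projection on `A`. -/
def IsProj3 {A : Type*} (f : A → A → A → A) : Prop :=
  ∃ i : Fin 3, ∀ x : Fin 3 → A, f (x 0) (x 1) (x 2) = x i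

/-- `g` is a 6-ary projection on `A`. -/
def IsProj6 {A : Type*} (g : A → A → A → A → A → A → A) : Prop :=
  ∃ i : Fin 6, ∀ x : Fin 6 → A, g (x 0) (x 1) (x 2) (x 3) (x 4) (x 5) = x i

/-- Index of the 6-ary projection chosen for an edge colored `(a, b)`. -/
def edgeIdx : Fin 3 → Fin 3 → Fin 6
  | 0, 1 => 0
  | 1, 0 => 1
  | 0, 2 => 2
  | 2, 0 => 3
  | 1, 2 => 4
  | 2, 1 => 5
  | _, _ => 0

lemma vec3_apply {A : Type*} (i : Fin 3) (x : Fin 3 → A) :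
    ![x 0, x 1, x 2] i = x i := by fin_cases i <;> rfl

lemma vec6_apply {A : Type*} (i : Fin 6) (x : Fin 6 → A) :
    ![x 0, x 1, x 2, x 3, x 4, x 5] i = x i := by fin_cases i <;> rfl

theorem stmt2.{u} {V : Type*} [Fintype V] (G : SimpleGraph V) (hcol : G.Colorable 3) :
    ∀ A : Type u, ∃ (f : V → A → A → A → A) (g : V → V → A → A → A → A → A → A → A),
      (∀ v, IsProj3 (f v)) ∧ (∀ u v, G.Adj u v → IsProj6 (g u v)) ∧
        SatisfiesSigma G f g := by
  intro A
  obtain ⟨c⟩ := hcol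
  refine ⟨fun v x y z => ![x, y, z] (c v),
    fun u v a0 a1 a2 a3 a4 a5 => ![a0, a1, a2, a3, a4, a5] (edgeIdx (c u) (c v)),
    fun v => ⟨c v, fun x => vec3_apply _ _⟩,
    fun u v _ => ⟨edgeIdx (c u) (c v), fun x => vec6_apply _ _⟩,
    fun u v huv x y z => ?_⟩
  have hne : c u ≠ c v := c.valid huv
  beta_reduce
  have hu3 : c u = 0 ∨ c u = 1 ∨ c u = 2 := by omega
  have hv3 : c v = 0 ∨ c v = 1 ∨ c v = 2 := by omega
  rcases hu3 with hu | hu | hu <;> rcases hv3 with hv | hv | hv <;>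
    rw [hu, hv] <;> first
      | exact absurd (hu.trans hv.symm) hne
      | exact ⟨rfl, rfl⟩
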